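/- Every odd diamond and every odd one-direction is a minimal obstruction, i.e., it has no odd dijoin but every proper cut minor of it has an odd dijoin. -/

import Mathlib

open Relation

/-! ## Finite directed multigraphs -/

/-- A finite directed multigraph: finite vertex and edge types together with
tail and head maps (loops and parallel/anti-parallel edges are allowed). -/
structure MultiDigraph : Type 1 where
  V : Type
  E : Type
  [fv : Fintype V]
  [fe : Fintype E]
  [dv : DecidableEq V]
  [de : DecidableEq E]
  tail : E → V
  head : E → V

attribute [instance] MultiDigraph.fv MultiDigraph.fe MultiDigraph.dv MultiDigraph.de

namespace MultiDigraph

variable (D : MultiDigraph)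

/-- The set of edges crossing the partition `(X, Xᶜ)` of the vertex set. -/
def cutAt (X : Set D.V) : Set D.E :=
  {e | (D.tail e ∈ X ∧ D.head e ∉ X) ∨ (D.tail e ∉ X ∧ D.head e ∈ X)}

/-- A cut: a nonempty set of edges of the form `cutAt X`. -/
def IsCut (S : Set D.E) : Prop := S.Nonempty ∧ ∃ X : Set D.V, S = D.cutAt X

/-- A bond: a cut containing no other cut properly. -/
def IsBond (S : Set D.E) : Prop := D.IsCut S ∧ ∀ S', D.IsCut S' → S' ⊆ S → S' = S

/-- A directed cut: a nonempty cut `cutAt X` such that no edge enters `X`. -/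
def IsDirectedCut (S : Set D.E) : Prop :=
  S.Nonempty ∧ ∃ X : Set D.V, S = D.cutAt X ∧ ∀ e : D.E, ¬(D.tail e ∉ X ∧ D.head e ∈ X)

/-- A directed bond: a bond which is a directed cut. -/
def IsDirectedBond (S : Set D.E) : Prop := D.IsBond S ∧ D.IsDirectedCut S

/-- An odd dijoin: an edge set meeting every directed bond an odd number of times. -/
def IsOddDijoin (J : Set D.E) : Prop := ∀ S : Set D.E, D.IsDirectedBond S → Odd (J ∩ S).ncard

def HasOddDijoin : Prop := ∃ J : Set D.E, D.IsOddDijoin J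

/-- One-step relation used for weak connectivity of the subgraph spanned by `A`:
`x` and `y` are joined by an edge of `A`. -/
def touchRel (A : Set D.E) : D.V → D.V → Prop :=
  fun x y => ∃ e ∈ A, D.tail e = x ∧ D.head e = y

/-- Contraction `D/A`: delete the edges of `A` and identify each weak component of `D[A]`. -/
noncomputable def contract (A : Set D.E) : MultiDigraph :=
  letI s := EqvGen.setoid (D.touchRel A)
  { V := Quotient s
    E := {e : D.E // e ∉ A}
    fv := Fintype.ofFinite _
    fe := Fintype.ofFinite _
    dv := Classical.decEq _
    de := Classical.decEq _
    tail := fun e => Quotient.mk s (D.tail e.1)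
    head := fun e => Quotient.mk s (D.head e.1) }

/-- A step of a directed walk. -/
def dstep : D.V → D.V → Prop := fun a b => ∃ e : D.E, D.tail e = a ∧ D.head e = b

/-- A step of a directed walk avoiding a fixed edge `e₀`. -/
def dstepAvoiding (e₀ : D.E) : D.V → D.V → Prop :=
  fun a b => ∃ e : D.E, e ≠ e₀ ∧ D.tail e = a ∧ D.head e = b

/-- An edge is deletable if it is not a loop and there is a directed path from its tail
to its head not using it. -/
def Deletable (e : D.E) : Prop :=
  D.tail e ≠ D.head e ∧ ReflTransGen (D.dstepAvoiding e) (D.tail e) (D.head e)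

/-- Deleting one edge. -/
noncomputable def deleteEdge (e : D.E) : MultiDigraph where
  V := D.V
  E := {f : D.E // f ≠ e}
  fv := D.fv
  fe := Fintype.ofFinite _
  dv := D.dv
  de := Classical.decEq _
  tail := fun f => D.tail f.1
  head := fun f => D.head f.1

/-- An isolated vertex. -/
def Isolated (v : D.V) : Prop := ∀ e : D.E, D.tail e ≠ v ∧ D.head e ≠ v

/-- Deleting an isolated vertex. -/
noncomputable def deleteVertex (v : D.V) (h : D.Isolated v) : MultiDigraph where
  V := {u : D.V // u ≠ v}
  E := D.E
  fv := Fintype.ofFinite _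
  fe := D.fe
  dv := Classical.decEq _
  de := D.de
  tail := fun e => ⟨D.tail e, (h e).1⟩
  head := fun e => ⟨D.head e, (h e).2⟩

/-- A digraph is acyclic if it has no directed cycle. -/
def Acyclic : Prop := ∀ a b : D.V, D.dstep a b → ¬ ReflTransGen D.dstep b a

/-- A step of an undirected walk. -/
def ustep : D.V → D.V → Prop :=
  fun a b => ∃ e : D.E, (D.tail e = a ∧ D.head e = b) ∨ (D.tail e = b ∧ D.head e = a)

/-- Weak connectivity. -/
def WeaklyConnected : Prop := ∀ a b : D.V, ReflTransGen D.ustep a b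

/-- A step of an undirected walk avoiding the vertex `v`. -/
def ustepAvoiding (v : D.V) : D.V → D.V → Prop :=
  fun a b => a ≠ v ∧ b ≠ v ∧ D.ustep a b

/-- The underlying multigraph is 2-vertex-connected. -/
def TwoConnected : Prop :=
  3 ≤ Fintype.card D.V ∧ D.WeaklyConnected ∧
    ∀ v a b : D.V, a ≠ v → b ≠ v → ReflTransGen (D.ustepAvoiding v) a b

/-- `D` is an oriented graph: no loops and no pair of parallel or anti-parallel edges. -/
def Oriented : Prop :=
  (∀ e : D.E, D.tail e ≠ D.head e) ∧
    ∀ e f : D.E, e ≠ f → ({D.tail e, D.head e} : Set D.V) ≠ {D.tail f, D.head f}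

/-- `D` is transitively reduced: no edge of `D` is deletable. -/
def TransitivelyReduced : Prop := ∀ e : D.E, ¬ D.Deletable e

end MultiDigraph

/-! ## Digraph isomorphism -/

/-- An isomorphism of directed multigraphs. -/
structure DigraphIso (D₁ D₂ : MultiDigraph) where
  vmap : D₁.V ≃ D₂.V
  emap : D₁.E ≃ D₂.E
  tail_eq : ∀ e, D₂.tail (emap e) = vmap (D₁.tail e)
  head_eq : ∀ e, D₂.head (emap e) = vmap (D₁.head e)

def IsIsomorphic (D₁ D₂ : MultiDigraph) : Prop := Nonempty (DigraphIso D₁ D₂)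

/-! ## Cut minors -/

/-- A single cut-minor step: contraction of an edge, deletion of a deletable edge, or
deletion of an isolated vertex. -/
inductive CutMinorStep : MultiDigraph → MultiDigraph → Prop
  | contractEdge (D : MultiDigraph) (e : D.E) : CutMinorStep (D.contract {e}) D
  | delEdge (D : MultiDigraph) (e : D.E) (h : D.Deletable e) : CutMinorStep (D.deleteEdge e) D
  | delVertex (D : MultiDigraph) (v : D.V) (h : D.Isolated v) :
      CutMinorStep (D.deleteVertex v h) D

/-- `D₁` is a cut minor of `D₂`. -/
def IsCutMinor (D₁ D₂ : MultiDigraph) : Prop := ReflTransGen CutMinorStep D₁ D₂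

/-- A proper cut minor: a cut minor which is not isomorphic to the digraph itself. -/
def IsProperCutMinor (D₁ D₂ : MultiDigraph) : Prop :=
  IsCutMinor D₁ D₂ ∧ ¬ IsIsomorphic D₁ D₂

/-- A minimal obstruction: a digraph without an odd dijoin all of whose proper cut minors
have an odd dijoin. -/
def MinimalObstruction (D : MultiDigraph) : Prop :=
  ¬ D.HasOddDijoin ∧ ∀ D' : MultiDigraph, IsProperCutMinor D' D → D'.HasOddDijoin

/-! ## Cycles and forests in the underlying multigraph -/

namespace MultiDigraph

variable (D : MultiDigraph)

/-- `X : D.E → SignType` is the signed incidence vector of a cycle of the underlying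
multigraph of `D`, signs recording forward/backward edges of a cyclic traversal. -/
def IsSignedCycle (X : D.E → SignType) : Prop :=
  ∃ n : ℕ, 0 < n ∧ ∃ (v : ZMod n → D.V) (ed : ZMod n → D.E) (dir : ZMod n → Bool),
    Function.Injective v ∧ Function.Injective ed ∧
    (∀ i, (dir i = true → D.tail (ed i) = v i ∧ D.head (ed i) = v (i + 1)) ∧
      (dir i = false → D.tail (ed i) = v (i + 1) ∧ D.head (ed i) = v i)) ∧
    (∀ i, X (ed i) = if dir i then 1 else -1) ∧
    (∀ f, (∀ i, ed i ≠ f) → X f = 0)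

/-- The sub-multigraph spanned by `A` is a forest: it contains no cycle. -/
def IsForestOn (A : Set D.E) : Prop :=
  ¬ ∃ X : D.E → SignType, D.IsSignedCycle X ∧ ∀ e : D.E, X e ≠ 0 → e ∈ A

end MultiDigraph

/-! ## The cut space over 𝔽₂ -/

/-- Indicator vector of a set, over `𝔽₂ = ZMod 2`. -/
noncomputable def eindicator {α : Type} (C : Set α) : α → ZMod 2 := C.indicator 1

namespace MultiDigraph

variable (D : MultiDigraph)

/-- The cut space of (the underlying multigraph of) `D`: the `𝔽₂`-span of the
indicator vectors of the bonds. -/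
noncomputable def cutSpace : Submodule (ZMod 2) (D.E → ZMod 2) :=
  Submodule.span (ZMod 2) (eindicator '' {S : Set D.E | D.IsBond S})

/-- `ℬ` is a basis of the cut space of `D` (a family of edge sets whose indicator
vectors are linearly independent and span the cut space). -/
noncomputable def IsCutSpaceBasis (ℬ : Set (Set D.E)) : Prop :=
  LinearIndependent (ZMod 2) (fun S : ℬ => eindicator (S : Set D.E)) ∧
    Submodule.span (ZMod 2) (eindicator '' ℬ) = D.cutSpace

end MultiDigraph

/-! ## Special digraphs -/

/-- The digraph `𝒟(n₀,n₁,n₂)`: three layers, with all edges from layer 0 to layer 1 and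
from layer 1 to layer 2. -/
def layeredD (n₀ n₁ n₂ : ℕ) : MultiDigraph where
  V := (Fin n₀ ⊕ Fin n₁) ⊕ Fin n₂
  E := (Fin n₀ × Fin n₁) ⊕ (Fin n₁ × Fin n₂)
  tail := Sum.elim (fun p => Sum.inl (Sum.inl p.1)) (fun p => Sum.inl (Sum.inr p.1))
  head := Sum.elim (fun p => Sum.inl (Sum.inr p.2)) (fun p => Sum.inr p.2)

/-- `K⃗_{m,n}`: the complete bipartite graph oriented from the class of size `m` to the
class of size `n`. -/
def oneDirK (m n : ℕ) : MultiDigraph where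
  V := Fin m ⊕ Fin n
  E := Fin m × Fin n
  tail := fun p => Sum.inl p.1
  head := fun p => Sum.inr p.2

/-- A diamond: two hubs and `n` further vertices, each of which is either a source with its
two edges going to the hubs, or a sink with its two edges coming from the hubs
(`σ i = true` meaning `xᵢ` is a source). -/
def diamondD (n : ℕ) (σ : Fin n → Bool) : MultiDigraph where
  V := Fin n ⊕ Fin 2
  E := Fin n × Fin 2
  tail := fun p => if σ p.1 then Sum.inl p.1 else Sum.inr p.2
  head := fun p => if σ p.1 then Sum.inr p.2 else Sum.inl p.1

/-- The bicycle `C⃡_k`: the cycle of length `k` with every edge replaced by a pair of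
anti-parallel directed edges. -/
noncomputable def bicycle (k : ℕ) (hk : k ≠ 0) : MultiDigraph :=
  haveI : NeZero k := ⟨hk⟩
  { V := ZMod k
    E := ZMod k × Bool
    fv := inferInstance
    fe := inferInstance
    dv := inferInstance
    de := inferInstance
    tail := fun p => if p.2 then p.1 else p.1 + 1
    head := fun p => if p.2 then p.1 + 1 else p.1 }

/-- An odd diamond. -/
def IsOddDiamond (D : MultiDigraph) : Prop :=
  ∃ (n : ℕ) (σ : Fin n → Bool), 3 ≤ n ∧ Odd (n + 2) ∧ IsIsomorphic D (diamondD n σ)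

/-- An odd one-direction. -/
def IsOddOneDirection (D : MultiDigraph) : Prop :=
  ∃ m n : ℕ, 2 ≤ m ∧ 2 ≤ n ∧ Odd (m + n) ∧ IsIsomorphic D (oneDirK m n)

/-! ## Symmetric difference of a family of sets -/

/-- The symmetric difference of a finite family of sets. -/
def symmDiffFam {α : Type} {k : ℕ} (F : Fin k → Set α) : Set α :=
  {a | Odd ({i : Fin k | a ∈ F i}).ncard}

/-! ## Oriented matroids -/

/-- Raw data of an oriented matroid: a finite ground set together with a collection of
signed subsets (encoded as functions to `SignType`). -/
structure PreOM : Type 1 where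
  E : Type
  [fe : Fintype E]
  [de : DecidableEq E]
  circuits : Set (E → SignType)

attribute [instance] PreOM.fe PreOM.de

/-- The support of a signed set. -/
def sgnSupport {α : Type} (X : α → SignType) : Set α := {e | X e ≠ 0}

namespace PreOM

/-- The oriented matroid axioms for the collection of signed circuits. -/
def IsOM (M : PreOM) : Prop :=
  (0 : M.E → SignType) ∉ M.circuits ∧
  (∀ X ∈ M.circuits, -X ∈ M.circuits) ∧
  (∀ X ∈ M.circuits, ∀ Y ∈ M.circuits, sgnSupport X ⊆ sgnSupport Y → X = Y ∨ X = -Y) ∧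
  ∀ X ∈ M.circuits, ∀ Y ∈ M.circuits, X ≠ -Y → ∀ e : M.E, X e = 1 → Y e = -1 →
    ∃ Z ∈ M.circuits, (∀ f, Z f = 1 → f ≠ e ∧ (X f = 1 ∨ Y f = 1)) ∧
      ∀ f, Z f = -1 → f ≠ e ∧ (X f = -1 ∨ Y f = -1)

/-- The circuits of the underlying matroid: supports of signed circuits. -/
def UCircuits (M : PreOM) : Set (Set M.E) :=
  {C | ∃ X ∈ M.circuits, C = sgnSupport X}

/-- A directed circuit: the support of a signed circuit with empty negative part. -/
def IsDirectedCircuit (M : PreOM) (C : Set M.E) : Prop :=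
  ∃ X ∈ M.circuits, (∀ e, X e ≠ -1) ∧ C = {e | X e = 1}

/-- Independent sets of the underlying matroid. -/
def Indep (M : PreOM) (I : Set M.E) : Prop := ∀ C ∈ M.UCircuits, ¬ C ⊆ I

/-- Bases of the underlying matroid. -/
def IsBase (M : PreOM) (B : Set M.E) : Prop :=
  M.Indep B ∧ ∀ B', M.Indep B' → B ⊆ B' → B' = B

/-- Cocircuits of the underlying matroid: minimal sets meeting every base. -/
def IsCocircuit (M : PreOM) (S : Set M.E) : Prop :=
  (∀ B, M.IsBase B → (S ∩ B).Nonempty) ∧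
    ∀ S' : Set M.E, S' ⊂ S → ¬ ∀ B, M.IsBase B → (S' ∩ B).Nonempty

/-- Signed cocircuits: signed sets supported on a cocircuit and orthogonal to every
signed circuit. -/
def IsSignedCocircuit (M : PreOM) (Y : M.E → SignType) : Prop :=
  M.IsCocircuit (sgnSupport Y) ∧
    ∀ X ∈ M.circuits,
      ((∃ e, (Y e = 1 ∧ X e = 1) ∨ (Y e = -1 ∧ X e = -1)) ↔
        (∃ e, (Y e = 1 ∧ X e = -1) ∨ (Y e = -1 ∧ X e = 1)))

/-- An element `e` is butterfly-contractible if there is a cocircuit `S` with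
`(S \ {e}, {e})` a signed cocircuit. -/
def ButterflyContractible (M : PreOM) (e : M.E) : Prop :=
  ∃ Y : M.E → SignType, M.IsSignedCocircuit Y ∧ Y e = -1 ∧ ∀ f, f ≠ e → Y f ≠ -1

/-- Deletion of a set of elements. -/
noncomputable def deleteSet (M : PreOM) (A : Set M.E) : PreOM where
  E := {f : M.E // f ∉ A}
  fe := Fintype.ofFinite _
  de := Classical.decEq _
  circuits := {X : {f : M.E // f ∉ A} → SignType |
    ∃ X' ∈ M.circuits, (∀ a ∈ A, X' a = 0) ∧ ∀ f : {f : M.E // f ∉ A}, X f = X' f.1}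

/-- Contraction of a single element: signed circuits are the support-minimal nonempty
traces of signed circuits. -/
noncomputable def contractElem (M : PreOM) (e : M.E) : PreOM where
  E := {f : M.E // f ≠ e}
  fe := Fintype.ofFinite _
  de := Classical.decEq _
  circuits := {X : {f : M.E // f ≠ e} → SignType |
    X ≠ 0 ∧ ∃ X' ∈ M.circuits, (∀ f : {f : M.E // f ≠ e}, X f = X' f.1) ∧
      ¬ ∃ Z ∈ M.circuits, (sgnSupport Z \ {e}) ⊂ (sgnSupport X' \ {e})}

/-- Isomorphism of (pre-)oriented matroids. -/
def Iso (M N : PreOM) : Prop :=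
  ∃ σ : M.E ≃ N.E, ∀ X : N.E → SignType, X ∈ N.circuits ↔ (X ∘ σ) ∈ M.circuits

/-- A minimal dependent set of a vector configuration. -/
def IsMinimalDep {F : Type} [Field F] {n : ℕ} {E : Type} (φ : E → (Fin n → F))
    (C : Set E) : Prop :=
  ¬ LinearIndependent F (fun e : C => φ e.1) ∧
    ∀ C' : Set E, C' ⊂ C → LinearIndependent F (fun e : C' => φ e.1)

/-- The underlying matroid is regular: representable over every field. -/
def Regular (M : PreOM) : Prop :=
  ∀ (F : Type) [Field F], ∃ (n : ℕ) (φ : M.E → (Fin n → F)),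
    ∀ C : Set M.E, C ∈ M.UCircuits ↔ IsMinimalDep φ C

/-- `M` is non-even: its underlying matroid is regular and some set of elements meets
every directed circuit an odd number of times. -/
def NonEven (M : PreOM) : Prop :=
  M.Regular ∧ ∃ J : Set M.E, ∀ C : Set M.E, M.IsDirectedCircuit C → Odd (J ∩ C).ncard

/-- Totally cyclic: every element lies in a directed circuit. -/
def TotallyCyclic (M : PreOM) : Prop :=
  ∀ e : M.E, ∃ C : Set M.E, M.IsDirectedCircuit C ∧ e ∈ C

/-- Coindependent set: contains no cocircuit. -/
def Coindependent (M : PreOM) (A : Set M.E) : Prop :=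
  ∀ S : Set M.E, M.IsCocircuit S → ¬ S ⊆ A

/-- The circuit space of the underlying (binary) matroid, over `𝔽₂`. -/
noncomputable def circuitSpace (M : PreOM) : Submodule (ZMod 2) (M.E → ZMod 2) :=
  Submodule.span (ZMod 2) (eindicator '' M.UCircuits)

/-- A directed circuit basis: a family of directed circuits whose indicator vectors form a
basis of the circuit space. -/
noncomputable def IsDirectedCircuitBasis (M : PreOM) (ℬ : Set (Set M.E)) : Prop :=
  (∀ C ∈ ℬ, M.IsDirectedCircuit C) ∧
    LinearIndependent (ZMod 2) (fun C : ℬ => eindicator (C : Set M.E)) ∧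
    Submodule.span (ZMod 2) (eindicator '' ℬ) = M.circuitSpace

end PreOM

/-! ## GB-minors -/

/-- A single GB-minor step: deletion of an element, or contraction of a
butterfly-contractible element. -/
inductive GBStep : PreOM → PreOM → Prop
  | del (M : PreOM) (e : M.E) : GBStep (M.deleteSet {e}) M
  | con (M : PreOM) (e : M.E) (h : M.ButterflyContractible e) : GBStep (M.contractElem e) M

/-- `N` is a GB-minor of `M`. -/
def IsGBMinor (N M : PreOM) : Prop := ReflTransGen GBStep N M

/-! ## Oriented matroids from digraphs -/

/-- The oriented bond matroid `M*(D)` of a digraph `D`: signed circuits are the signed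
incidence vectors of the bonds of `D`. -/
def bondOM (D : MultiDigraph) : PreOM where
  E := D.E
  circuits := {X : D.E → SignType | ∃ W : Set D.V, D.IsBond (D.cutAt W) ∧
    ∀ e : D.E, (X e = 1 ↔ (D.tail e ∈ W ∧ D.head e ∉ W)) ∧
      (X e = -1 ↔ (D.head e ∈ W ∧ D.tail e ∉ W))}

/-- The oriented graphic matroid `M(D)` of a digraph `D`: signed circuits are the signed
incidence vectors of the cycles of the underlying multigraph of `D`. -/
def cycleOM (D : MultiDigraph) : PreOM where
  E := D.E
  circuits := {X : D.E → SignType | D.IsSignedCycle X}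

/-!
Every cut-minor step preserves the existence of an odd dijoin. Contracting an edge or deleting
an isolated vertex only removes directed bonds. If `e` is deletable, its directed path together
with `e` is an edge set meeting every cut evenly, so an odd dijoin can be rerouted off `e`; and
every directed bond of `D \ e` is `S \ {e}` for a directed bond `S` of `D`, because no cut of `D`
is `{e}`.

Odd diamonds and odd one-directions are orientations of complete bipartite graphs that are
graded (every edge goes up one level) and have no parallel edges, so no edge is deletable; nor is
any vertex isolated. Hence every proper cut minor factors through some `D/e`, whose directed
bonds are the directed bonds of `D` avoiding `e`, and an explicit edge set meets each of these
oddly. On the other hand, the directed bonds of `D` contain an odd family covering every edge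
exactly twice (all vertex stars of a one-direction; the stars of the non-hubs and the two cuts
separating the hubs of a diamond), so summing over 𝔽₂ shows that `D` has no odd dijoin.
-/

/-! ### Parity over 𝔽₂ -/

section Parity

variable {α : Type}

theorem sum_eindicator [Fintype α] (s : Set α) : ∑ a, eindicator s a = (s.ncard : ZMod 2) := by
  classical
  simp [eindicator, Set.indicator_apply, Finset.sum_boole, Set.ncard_eq_toFinset_card']

theorem eindicator_dotProduct_eindicator [Fintype α] (s t : Set α) :
    eindicator s ⬝ᵥ eindicator t = ((s ∩ t).ncard : ZMod 2) := by
  rw [← sum_eindicator, eindicator, eindicator, eindicator, Set.inter_indicator_one]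
  rfl

theorem eindicator_symmDiff (s t : Set α) :
    eindicator (symmDiff s t) = eindicator s + eindicator t := by
  classical
  ext a
  by_cases hs : a ∈ s <;> by_cases ht : a ∈ t <;>
    simp [eindicator, Set.mem_symmDiff, hs, ht, CharTwo.add_self_eq_zero]

theorem natCast_ncard_symmDiff_inter [Fintype α] (s t u : Set α) :
    ((symmDiff s t ∩ u).ncard : ZMod 2) = (s ∩ u).ncard + (t ∩ u).ncard := by
  simp only [← eindicator_dotProduct_eindicator, eindicator_symmDiff, add_dotProduct]

theorem natCast_ncard_singleton_inter (a : α) (u : Set α) :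
    (({a} ∩ u).ncard : ZMod 2) = eindicator u a := by
  classical
  by_cases h : a ∈ u <;>
    simp [eindicator, h, Set.singleton_inter_of_mem, Set.singleton_inter_eq_empty.mpr]

end Parity

theorem Function.Injective.ncard_preimage_inter {α β : Type} {f : α → β} (hf : f.Injective)
    (t : Set β) (s : Set α) : (f ⁻¹' t ∩ s).ncard = (t ∩ f '' s).ncard := by
  rw [Set.inter_comm, Set.inter_comm t, ← Set.image_inter_preimage,
    Set.ncard_image_of_injective _ hf]

theorem Relation.EqvGen.mem_iff {α : Type} {r : α → α → Prop} {s : Set α}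
    (hr : ∀ a b, r a b → (a ∈ s ↔ b ∈ s)) {a b : α} (h : EqvGen r a b) : a ∈ s ↔ b ∈ s :=
  (Equivalence.eqvGen_iff (r := fun x y => (x ∈ s ↔ y ∈ s))
    ⟨fun _ => Iff.rfl, Iff.symm, Iff.trans⟩).mp (EqvGen.mono hr _ _ h)

theorem Relation.ReflTransGen.mem_of_mem {α : Type} {r : α → α → Prop} {s : Set α}
    (hr : ∀ a b, r a b → a ∈ s → b ∈ s) {a b : α} (h : ReflTransGen r a b) (ha : a ∈ s) :
    b ∈ s := by
  induction h with
  | refl => exact ha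
  | tail _ hbc ih => exact hr _ _ hbc ih

/-! ### Cuts and bonds -/

namespace MultiDigraph

variable {D : MultiDigraph}

theorem mem_cutAt_iff {X : Set D.V} {f : D.E} :
    f ∈ D.cutAt X ↔ ¬(D.tail f ∈ X ↔ D.head f ∈ X) := by
  change (_ ∧ _) ∨ (_ ∧ _) ↔ _
  tauto

theorem cutAt_compl (X : Set D.V) : D.cutAt Xᶜ = D.cutAt X := by
  ext f
  simp only [mem_cutAt_iff, Set.mem_compl_iff]
  tauto

theorem cutAt_symmDiff (X Y : Set D.V) :
    D.cutAt (symmDiff X Y) = symmDiff (D.cutAt X) (D.cutAt Y) := by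
  ext f
  simp only [mem_cutAt_iff, Set.mem_symmDiff]
  tauto

theorem eindicator_cutAt (X : Set D.V) (f : D.E) :
    eindicator (D.cutAt X) f = eindicator X (D.tail f) + eindicator X (D.head f) := by
  classical
  by_cases ht : D.tail f ∈ X <;> by_cases hh : D.head f ∈ X <;>
    simp [eindicator, mem_cutAt_iff, ht, hh, CharTwo.add_self_eq_zero]

theorem not_isolated_of_mem_cutAt {v : D.V} {f : D.E} (hf : f ∈ D.cutAt {v}) :
    ¬ D.Isolated v := fun h => by
  simp [mem_cutAt_iff, (h f).1, (h f).2] at hf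

theorem eqvGen_touchRel_mem_iff {A : Set D.E} {Y : Set D.V} (hA : ∀ f ∈ A, f ∉ D.cutAt Y)
    {a b : D.V} (h : EqvGen (D.touchRel A) a b) : a ∈ Y ↔ b ∈ Y := by
  refine h.mem_iff ?_
  rintro _ _ ⟨f, hf, rfl, rfl⟩
  exact not_not.mp (mem_cutAt_iff.not.mp (hA f hf))

/-- A cut is a bond as soon as each of its shores is connected by edges off the cut. -/
theorem isBond_cutAt_of_eqvGen {X : Set D.V} (hne : (D.cutAt X).Nonempty) {c₁ c₂ : D.V}
    (h₁ : ∀ v ∈ X, EqvGen (D.touchRel (D.cutAt X)ᶜ) v c₁)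
    (h₂ : ∀ v ∉ X, EqvGen (D.touchRel (D.cutAt X)ᶜ) v c₂) : D.IsBond (D.cutAt X) := by
  refine ⟨⟨hne, X, rfl⟩, ?_⟩
  rintro _ ⟨⟨g, hg⟩, Y, rfl⟩ hYX
  have hY : ∀ {a b}, EqvGen (D.touchRel (D.cutAt X)ᶜ) a b → (a ∈ Y ↔ b ∈ Y) :=
    eqvGen_touchRel_mem_iff (A := (D.cutAt X)ᶜ) fun f hf hfY => hf (hYX hfY)
  have key : ∀ f ∈ D.cutAt X, f ∈ D.cutAt Y ↔ ¬(c₁ ∈ Y ↔ c₂ ∈ Y) := by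
    intro f hf
    rw [mem_cutAt_iff] at hf ⊢
    by_cases ht : D.tail f ∈ X
    · rw [hY (h₁ _ ht), hY (h₂ _ fun hh => hf (iff_of_true ht hh))]
    · rw [hY (h₂ _ ht), hY (h₁ _ (not_not.mp fun hh => hf (iff_of_false ht hh)))]
      tauto
  exact hYX.antisymm fun f hf => (key f hf).2 ((key g (hYX hg)).1 hg)

theorem isDirectedBond_cutAt {X : Set D.V} (hb : D.IsBond (D.cutAt X))
    (hX : ∀ f, ¬(D.tail f ∉ X ∧ D.head f ∈ X)) : D.IsDirectedBond (D.cutAt X) :=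
  ⟨hb, hb.1.1, X, rfl, hX⟩

theorem isDirectedBond_cutAt_singleton {v : D.V} (hb : D.IsBond (D.cutAt {v}))
    (hv : (∀ f, D.head f ≠ v) ∨ ∀ f, D.tail f ≠ v) : D.IsDirectedBond (D.cutAt {v}) := by
  rcases hv with hv | hv
  · exact isDirectedBond_cutAt hb fun f hf => hv f hf.2
  · rw [← cutAt_compl] at hb ⊢
    exact isDirectedBond_cutAt hb fun f hf => hf.1 (hv f)

theorem not_hasOddDijoin_of_cover {ι : Type} [Fintype ι] (F : ι → Set D.E)
    (hF : ∀ i, D.IsDirectedBond (F i)) (hcover : ∀ f, Even {i | f ∈ F i}.ncard)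
    (hι : Odd (Fintype.card ι)) : ¬ D.HasOddDijoin := by
  rintro ⟨J, hJ⟩
  have hsum : ∑ i, eindicator (F i) = 0 := by
    ext f
    rw [Finset.sum_apply, Pi.zero_apply]
    exact (sum_eindicator {i | f ∈ F i}).trans (ZMod.natCast_eq_zero_iff_even.mpr (hcover f))
  have h := congrArg (eindicator J ⬝ᵥ ·) hsum
  simp only [dotProduct_sum, eindicator_dotProduct_eindicator, dotProduct_zero,
    ZMod.natCast_eq_one_iff_odd.mpr (hJ _ (hF _)), Finset.sum_const, Finset.card_univ,
    nsmul_eq_mul, mul_one, ZMod.natCast_eq_zero_iff_even] at h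
  exact Nat.not_even_iff_odd.mpr hι h

theorem not_hasOddDijoin_of_cutAt_singleton (hloop : ∀ f, D.tail f ≠ D.head f)
    (hstar : ∀ v, D.IsDirectedBond (D.cutAt {v})) (hV : Odd (Fintype.card D.V)) :
    ¬ D.HasOddDijoin := by
  refine not_hasOddDijoin_of_cover _ hstar (fun f => ?_) hV
  have : {v | f ∈ D.cutAt {v}} = {D.tail f, D.head f} := by
    ext v
    simp only [Set.mem_ofPred_eq, mem_cutAt_iff, Set.mem_singleton_iff, Set.mem_insert_iff]
    have := hloop f
    grind
  rw [this, Set.ncard_pair (hloop f)]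
  exact even_two

theorem not_deletable_of_grading (ℓ : D.V → ℕ) (hℓ : ∀ f, ℓ (D.head f) = ℓ (D.tail f) + 1)
    (hinj : ∀ f g, D.tail f = D.tail g → D.head f = D.head g → f = g) (e : D.E) :
    ¬ D.Deletable e := by
  rintro ⟨-, hpath⟩
  have hlt : ∀ {a b}, ReflTransGen (D.dstepAvoiding e) a b → a = b ∨ ℓ a < ℓ b := by
    intro a b h
    induction h with
    | refl => exact Or.inl rfl
    | tail _ hstep ih =>
      obtain ⟨f, -, rfl, rfl⟩ := hstep
      have := hℓ f
      right
      rcases ih with rfl | h <;> omega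
  have he := hℓ e
  rcases hpath.cases_head with h | ⟨c, ⟨f, hfe, hft, rfl⟩, hrest⟩
  · rw [h] at he
    omega
  · rcases hlt hrest with hc | hc
    · exact hfe (hinj f e hft hc)
    · have := hℓ f
      rw [hft] at this
      omega

end MultiDigraph

/-! ### Isomorphisms -/

namespace DigraphIso

open MultiDigraph

variable {D₁ D₂ : MultiDigraph} (φ : DigraphIso D₁ D₂)

def refl (D : MultiDigraph) : DigraphIso D D :=
  ⟨Equiv.refl _, Equiv.refl _, fun _ => rfl, fun _ => rfl⟩

def symm : DigraphIso D₂ D₁ where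
  vmap := φ.vmap.symm
  emap := φ.emap.symm
  tail_eq e := φ.vmap.eq_symm_apply.mpr (by rw [← φ.tail_eq, φ.emap.apply_symm_apply])
  head_eq e := φ.vmap.eq_symm_apply.mpr (by rw [← φ.head_eq, φ.emap.apply_symm_apply])

theorem preimage_cutAt (Y : Set D₂.V) : φ.emap ⁻¹' D₂.cutAt Y = D₁.cutAt (φ.vmap ⁻¹' Y) := by
  ext f
  simp only [Set.mem_preimage, mem_cutAt_iff, φ.tail_eq, φ.head_eq]

theorem isCut_preimage {T : Set D₂.E} (hT : D₂.IsCut T) : D₁.IsCut (φ.emap ⁻¹' T) := by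
  obtain ⟨hne, Y, rfl⟩ := hT
  exact ⟨hne.preimage φ.emap.surjective, _, φ.preimage_cutAt Y⟩

theorem isDirectedBond_preimage {T : Set D₂.E} (hT : D₂.IsDirectedBond T) :
    D₁.IsDirectedBond (φ.emap ⁻¹' T) := by
  obtain ⟨⟨hcut, hmin⟩, -, Y, rfl, hdir⟩ := hT
  have hcut' := φ.isCut_preimage hcut
  rw [φ.preimage_cutAt] at hcut' ⊢
  refine isDirectedBond_cutAt ⟨hcut', fun C hC hCY => ?_⟩ fun f => ?_
  · have hC' : D₂.IsCut (φ.emap '' C) := by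
      rw [φ.emap.image_eq_preimage_symm]
      exact φ.symm.isCut_preimage hC
    rw [← φ.preimage_cutAt] at hCY ⊢
    rw [← hmin _ hC' (Set.image_subset_iff.mpr hCY), φ.emap.preimage_image]
  · simpa only [Set.mem_preimage, φ.tail_eq, φ.head_eq] using hdir (φ.emap f)

theorem hasOddDijoin (φ : DigraphIso D₁ D₂) (h : D₁.HasOddDijoin) : D₂.HasOddDijoin := by
  obtain ⟨J, hJ⟩ := h
  refine ⟨φ.emap '' J, fun S hS => ?_⟩
  rw [Set.inter_comm, ← φ.emap.injective.ncard_preimage_inter, Set.inter_comm]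
  exact hJ _ (φ.isDirectedBond_preimage hS)

theorem deletable {e : D₁.E} (h : D₁.Deletable e) : D₂.Deletable (φ.emap e) := by
  obtain ⟨hloop, hpath⟩ := h
  rw [Deletable, φ.tail_eq, φ.head_eq, φ.vmap.injective.ne_iff]
  refine ⟨hloop, hpath.lift φ.vmap ?_⟩
  rintro _ _ ⟨f, hfe, rfl, rfl⟩
  exact ⟨φ.emap f, φ.emap.injective.ne hfe, φ.tail_eq f, φ.head_eq f⟩

theorem isolated {v : D₁.V} (h : D₁.Isolated v) : D₂.Isolated (φ.vmap v) := by
  intro f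
  obtain ⟨f, rfl⟩ := φ.emap.surjective f
  rw [φ.tail_eq, φ.head_eq, φ.vmap.injective.ne_iff, φ.vmap.injective.ne_iff]
  exact h f

end DigraphIso

/-! ### Cut-minor steps -/

namespace MultiDigraph

variable {D : MultiDigraph}

section DeleteVertex

variable {v : D.V} (hv : D.Isolated v)

theorem deleteVertex_cutAt_preimage (Z : Set D.V) :
    (D.deleteVertex v hv).cutAt (Subtype.val ⁻¹' Z) = D.cutAt Z :=
  rfl

theorem deleteVertex_cutAt (X : Set (D.deleteVertex v hv).V) :
    (D.deleteVertex v hv).cutAt X = D.cutAt (Subtype.val '' X) := by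
  conv_lhs => rw [← Set.preimage_image_eq X Subtype.val_injective]
  rfl

theorem deleteVertex_isCut_iff {S : Set D.E} : (D.deleteVertex v hv).IsCut S ↔ D.IsCut S :=
  ⟨fun ⟨hne, X, hX⟩ => ⟨hne, _, hX.trans (deleteVertex_cutAt hv X)⟩,
    fun ⟨hne, Z, hZ⟩ => ⟨hne, _, hZ.trans (deleteVertex_cutAt_preimage hv Z).symm⟩⟩

theorem IsDirectedBond.of_deleteVertex {S : Set D.E}
    (hS : (D.deleteVertex v hv).IsDirectedBond S) : D.IsDirectedBond S := by
  obtain ⟨⟨hcut, hmin⟩, hne, X, rfl, hdir⟩ := hS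
  refine ⟨⟨(deleteVertex_isCut_iff hv).mp hcut,
    fun C hC => hmin C ((deleteVertex_isCut_iff hv).mpr hC)⟩, hne, _, deleteVertex_cutAt hv X,
    fun f => ?_⟩
  rintro ⟨ht, u, hu, hhu⟩
  have hu' : u = (D.deleteVertex v hv).head f := Subtype.ext hhu
  exact hdir f ⟨fun h => ht ⟨_, h, rfl⟩, hu' ▸ hu⟩

theorem deleteVertex_hasOddDijoin (hD : D.HasOddDijoin) : (D.deleteVertex v hv).HasOddDijoin :=
  let ⟨J, hJ⟩ := hD
  ⟨J, fun S hS => hJ S (hS.of_deleteVertex hv)⟩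

end DeleteVertex

/-- The directed bonds of `D` avoiding `e` are those of `D.contract {e}`, see
`contract_hasOddDijoin`. -/
def HasOddDijoinAwayFrom (e : D.E) : Prop :=
  ∃ J : Set D.E, ∀ S, D.IsDirectedBond S → e ∉ S → Odd (J ∩ S).ncard

theorem HasOddDijoin.awayFrom (hD : D.HasOddDijoin) (e : D.E) : D.HasOddDijoinAwayFrom e :=
  let ⟨J, hJ⟩ := hD
  ⟨J, fun S hS _ => hJ S hS⟩

section Contract

variable {e : D.E}

theorem image_val_preimage_cutAt {A : Set D.E} {Z : Set D.V} (hZ : Disjoint A (D.cutAt Z)) :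
    Subtype.val '' (Subtype.val ⁻¹' D.cutAt Z : Set {f // f ∉ A}) = D.cutAt Z := by
  rw [Set.image_preimage_eq_inter_range, Subtype.range_coe_subtype]
  exact Set.inter_eq_left.mpr fun f hf hfA => hZ.notMem_of_mem_left hfA hf

theorem IsDirectedBond.of_contract {S : Set (D.contract {e}).E}
    (hS : (D.contract {e}).IsDirectedBond S) : D.IsDirectedBond (Subtype.val '' S) := by
  let q := Quotient.mk (EqvGen.setoid (D.touchRel {e}))
  obtain ⟨⟨-, hmin⟩, hne, X, rfl, hdir⟩ := hS
  -- restate `X` over the quotient type, so that `q ⁻¹' X` typechecks without unfolding `contract`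
  obtain ⟨X, rfl⟩ : ∃ Y : Set (Quotient (EqvGen.setoid (D.touchRel {e}))), Y = X := ⟨X, rfl⟩
  have hq : q (D.tail e) = q (D.head e) := Quotient.sound (EqvGen.rel _ _ ⟨e, rfl, rfl, rfl⟩)
  have he : Disjoint {e} (D.cutAt (q ⁻¹' X)) := by
    simp [mem_cutAt_iff, hq]
  have hX : Subtype.val '' (D.contract {e}).cutAt X = D.cutAt (q ⁻¹' X) :=
    image_val_preimage_cutAt he
  rw [hX]
  refine isDirectedBond_cutAt ⟨⟨hX ▸ hne.image _, _, rfl⟩, ?_⟩ fun f => ?_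
  · rintro _ ⟨⟨g, hg⟩, Z, rfl⟩ hZX
    have heZ : Disjoint {e} (D.cutAt Z) := Set.disjoint_singleton_left.mpr fun h =>
      Set.disjoint_singleton_left.mp he (hZX h)
    have hsat : q ⁻¹' (q '' Z) = Z := by
      refine Set.Subset.antisymm (fun a ⟨b, hb, hba⟩ => ?_) (Set.subset_preimage_image q Z)
      exact (eqvGen_touchRel_mem_iff (fun f hf => heZ.notMem_of_mem_left hf)
        (Quotient.exact hba)).mp hb
    have hZ : Subtype.val ⁻¹' D.cutAt Z = (D.contract {e}).cutAt X :=
      hmin _ ⟨⟨⟨g, heZ.notMem_of_mem_right hg⟩, hg⟩, q '' Z, (congrArg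
        (fun Y => (Subtype.val ⁻¹' D.cutAt Y : Set {f // f ∉ ({e} : Set D.E)})) hsat).symm⟩
        fun _ hf => hZX hf
    calc D.cutAt Z = Subtype.val '' (Subtype.val ⁻¹' D.cutAt Z) :=
          (image_val_preimage_cutAt heZ).symm
      _ = D.cutAt (q ⁻¹' X) := hZ ▸ hX
  · by_cases hfe : f = e
    · subst hfe
      simp [hq]
    · exact hdir ⟨f, hfe⟩

theorem contract_hasOddDijoin (h : D.HasOddDijoinAwayFrom e) :
    (D.contract {e}).HasOddDijoin := by
  obtain ⟨J, hJ⟩ := h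
  refine ⟨Subtype.val ⁻¹' J, fun S hS => ?_⟩
  exact (congrArg Odd (Subtype.val_injective.ncard_preimage_inter J S)).mpr
    (hJ _ hS.of_contract fun ⟨f, hf, hfe⟩ => f.2 hfe)

end Contract

section DeleteEdge

variable {e : D.E}

theorem exists_ncard_inter_cutAt_of_reflTransGen {a b : D.V}
    (h : ReflTransGen (D.dstepAvoiding e) a b) :
    ∃ L : Set D.E, e ∉ L ∧
      ∀ X, ((L ∩ D.cutAt X).ncard : ZMod 2) = eindicator X a + eindicator X b := by
  induction h with
  | refl => exact ⟨∅, id, fun X => by simp [CharTwo.add_self_eq_zero]⟩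
  | tail _ hstep ih =>
    obtain ⟨L, heL, hL⟩ := ih
    obtain ⟨g, hge, rfl, rfl⟩ := hstep
    refine ⟨symmDiff L {g}, fun h => ?_, fun X => ?_⟩
    · rcases Set.mem_symmDiff.mp h with ⟨h, -⟩ | ⟨h, -⟩
      exacts [heL h, hge h.symm]
    · rw [natCast_ncard_symmDiff_inter, natCast_ncard_singleton_inter, hL, eindicator_cutAt]
      grind

namespace Deletable

theorem exists_mem_even_inter_cutAt (he : D.Deletable e) :
    ∃ C : Set D.E, e ∈ C ∧ ∀ X, ((C ∩ D.cutAt X).ncard : ZMod 2) = 0 := by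
  obtain ⟨L, heL, hL⟩ := exists_ncard_inter_cutAt_of_reflTransGen he.2
  refine ⟨symmDiff L {e}, Set.mem_symmDiff.mpr (Or.inr ⟨rfl, heL⟩), fun X => ?_⟩
  rw [natCast_ncard_symmDiff_inter, natCast_ncard_singleton_inter, hL, eindicator_cutAt]
  grind

theorem exists_isOddDijoin_not_mem (he : D.Deletable e) {J : Set D.E} (hJ : D.IsOddDijoin J) :
    ∃ J', D.IsOddDijoin J' ∧ e ∉ J' := by
  by_cases heJ : e ∈ J
  · obtain ⟨C, heC, hC⟩ := he.exists_mem_even_inter_cutAt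
    refine ⟨symmDiff J C, fun S hS => ?_, fun h => ?_⟩
    · obtain ⟨X, rfl, -⟩ := hS.2.2
      rw [← ZMod.natCast_eq_one_iff_odd, natCast_ncard_symmDiff_inter, hC, add_zero,
        ZMod.natCast_eq_one_iff_odd]
      exact hJ _ hS
    · rcases Set.mem_symmDiff.mp h with ⟨-, h⟩ | ⟨-, h⟩
      exacts [h heC, h heJ]
  · exact ⟨J, hJ, heJ⟩

theorem cutAt_ne_singleton (he : D.Deletable e) (Z : Set D.V) : D.cutAt Z ≠ {e} := by
  intro hZ
  refine mem_cutAt_iff.mp (hZ ▸ rfl : e ∈ D.cutAt Z) ?_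
  refine (EqvGen.reflTransGen_le_eqvGen _ _ _ he.2).mem_iff fun a b ⟨f, hfe, hfa, hfb⟩ => ?_
  have hf : f ∉ D.cutAt Z := hZ ▸ hfe
  rw [mem_cutAt_iff, not_not, hfa, hfb] at hf
  exact hf

theorem not_enters (he : D.Deletable e) {X : Set D.V}
    (hX : ∀ f ≠ e, ¬(D.tail f ∉ X ∧ D.head f ∈ X)) : ¬(D.tail e ∉ X ∧ D.head e ∈ X) :=
  fun ⟨ht, hh⟩ => he.2.mem_of_mem (s := Xᶜ)
    (fun _ _ ⟨f, hfe, hfa, hfb⟩ ha hb => hX f hfe ⟨hfa ▸ ha, hfb ▸ hb⟩) ht hh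

theorem cutAt_eq_of_sdiff_eq (he : D.Deletable e) {X Z : Set D.V}
    (h : D.cutAt X \ {e} = D.cutAt Z \ {e}) : D.cutAt X = D.cutAt Z := by
  have hne : ∀ f ≠ e, (f ∈ D.cutAt X ↔ f ∈ D.cutAt Z) := fun f hf => by
    simpa [hf] using Set.ext_iff.mp h f
  by_contra hXZ
  have hee : ¬(e ∈ D.cutAt X ↔ e ∈ D.cutAt Z) := fun hiff =>
    hXZ (Set.ext fun f => if hf : f = e then hf ▸ hiff else hne f hf)
  refine he.cutAt_ne_singleton (symmDiff X Z) (Set.ext fun f => ?_)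
  rw [cutAt_symmDiff, Set.mem_symmDiff, Set.mem_singleton_iff]
  by_cases hf : f = e
  · subst hf
    tauto
  · have := hne f hf
    tauto

end Deletable

theorem IsDirectedBond.of_deleteEdge (he : D.Deletable e) {S : Set (D.deleteEdge e).E}
    (hS : (D.deleteEdge e).IsDirectedBond S) :
    ∃ X, D.IsDirectedBond (D.cutAt X) ∧ Subtype.val '' S = D.cutAt X \ {e} := by
  obtain ⟨⟨-, hmin⟩, ⟨f₀, hf₀⟩, X, rfl, hdir⟩ := hS
  have hval : ∀ Z, Subtype.val '' (D.deleteEdge e).cutAt Z = D.cutAt Z \ {e} := fun Z => by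
    rw [show (D.deleteEdge e).cutAt Z = Subtype.val ⁻¹' D.cutAt Z from rfl,
      Set.image_preimage_eq_inter_range, Subtype.range_coe_subtype, Set.sdiff_eq]
    rfl
  refine ⟨X, isDirectedBond_cutAt ⟨⟨⟨Subtype.val f₀, hf₀⟩, X, rfl⟩, ?_⟩ fun f => ?_, hval X⟩
  · rintro _ ⟨⟨g₀, hg₀⟩, Z, rfl⟩ hZX
    obtain ⟨g, hg, hge⟩ : ∃ g ∈ D.cutAt Z, g ≠ e := by
      by_contra! h
      exact he.cutAt_ne_singleton Z (Set.eq_singleton_iff_unique_mem.mpr ⟨h g₀ hg₀ ▸ hg₀, h⟩)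
    have hZ := hmin _ ⟨⟨⟨g, hge⟩, hg⟩, Z, rfl⟩ fun f hf => hZX hf
    exact he.cutAt_eq_of_sdiff_eq ((hval Z).symm.trans ((congrArg _ hZ).trans (hval X)))
  · by_cases hf : f = e
    · exact hf ▸ he.not_enters fun f hf => hdir ⟨f, hf⟩
    · exact hdir ⟨f, hf⟩

theorem deleteEdge_hasOddDijoin (he : D.Deletable e) (hD : D.HasOddDijoin) :
    (D.deleteEdge e).HasOddDijoin := by
  obtain ⟨J₀, hJ₀⟩ := hD
  obtain ⟨J, hJ, heJ⟩ := he.exists_isOddDijoin_not_mem hJ₀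
  refine ⟨Subtype.val ⁻¹' J, fun S hS => ?_⟩
  obtain ⟨X, hX, hSX⟩ := hS.of_deleteEdge he
  have hodd := hJ _ hX
  rw [← Set.sdiff_singleton_eq_self (fun h => heJ h.1 : e ∉ J ∩ D.cutAt X),
    Set.inter_sdiff_assoc, ← hSX] at hodd
  exact (congrArg Odd (Subtype.val_injective.ncard_preimage_inter J S)).mpr hodd

end DeleteEdge

end MultiDigraph

theorem CutMinorStep.hasOddDijoin {D₁ D₂ : MultiDigraph} (h : CutMinorStep D₁ D₂)
    (hD : D₂.HasOddDijoin) : D₁.HasOddDijoin := by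
  cases h with
  | contractEdge D e => exact MultiDigraph.contract_hasOddDijoin (hD.awayFrom e)
  | delEdge D e he => exact MultiDigraph.deleteEdge_hasOddDijoin he hD
  | delVertex D v hv => exact MultiDigraph.deleteVertex_hasOddDijoin hv hD

theorem IsCutMinor.hasOddDijoin {D₁ D₂ : MultiDigraph} (h : IsCutMinor D₁ D₂)
    (hD : D₂.HasOddDijoin) : D₁.HasOddDijoin := by
  induction h using Relation.ReflTransGen.head_induction_on with
  | refl => exact hD
  | head hstep _ ih => exact hstep.hasOddDijoin ih

theorem minimalObstruction_of_forall_hasOddDijoinAwayFrom {D : MultiDigraph}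
    (hD : ¬ D.HasOddDijoin) (hdel : ∀ e, ¬ D.Deletable e) (hiso : ∀ v, ¬ D.Isolated v)
    (hcon : ∀ e, D.HasOddDijoinAwayFrom e) : MinimalObstruction D := by
  refine ⟨hD, fun D' ⟨hminor, hD'⟩ => ?_⟩
  rcases hminor.cases_tail with rfl | ⟨D₁, hD'₁, hstep⟩
  · exact absurd ⟨DigraphIso.refl _⟩ hD'
  · refine IsCutMinor.hasOddDijoin hD'₁ ?_
    cases hstep with
    | contractEdge _ e => exact MultiDigraph.contract_hasOddDijoin (hcon e)
    | delEdge _ e he => exact absurd he (hdel e)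
    | delVertex _ v hv => exact absurd hv (hiso v)

theorem DigraphIso.hasOddDijoinAwayFrom {D₁ D₂ : MultiDigraph} (φ : DigraphIso D₁ D₂)
    {e : D₁.E} (h : D₂.HasOddDijoinAwayFrom (φ.emap e)) : D₁.HasOddDijoinAwayFrom e := by
  obtain ⟨J, hJ⟩ := h
  refine ⟨φ.emap ⁻¹' J, fun S hS heS => ?_⟩
  rw [φ.emap.injective.ncard_preimage_inter]
  refine hJ _ ?_ (φ.emap.injective.mem_set_image.not.mpr heS)
  rw [φ.emap.image_eq_preimage_symm]
  exact φ.symm.isDirectedBond_preimage hS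

theorem DigraphIso.minimalObstruction {D M : MultiDigraph} (φ : DigraphIso D M)
    (hM : ¬ M.HasOddDijoin) (hdel : ∀ e, ¬ M.Deletable e) (hiso : ∀ v, ¬ M.Isolated v)
    (hcon : ∀ e, M.HasOddDijoinAwayFrom e) : MinimalObstruction D :=
  minimalObstruction_of_forall_hasOddDijoinAwayFrom (fun h => hM (φ.hasOddDijoin h))
    (fun _ h => hdel _ (φ.deletable h)) (fun _ h => hiso _ (φ.isolated h))
    (fun _ => φ.hasOddDijoinAwayFrom (hcon _))

/-! ### Oriented complete bipartite graphs -/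

/-- The complete bipartite graph on `Fin a ⊕ Fin b` in which the edges at the `i`-th vertex of
the first class all leave it if `σ i` and all enter it otherwise. Definitionally, `diamondD n σ`
is `orientedBiclique n 2 σ` and `oneDirK m n` is `orientedBiclique m n fun _ => true`; being an
`abbrev`, its vertex and edge types unfold for `rw` and `simp`. -/
abbrev orientedBiclique (a b : ℕ) (σ : Fin a → Bool) : MultiDigraph where
  V := Fin a ⊕ Fin b
  E := Fin a × Fin b
  tail p := if σ p.1 then Sum.inl p.1 else Sum.inr p.2
  head p := if σ p.1 then Sum.inr p.2 else Sum.inl p.1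

namespace orientedBiclique

open MultiDigraph

variable {a b : ℕ} {σ : Fin a → Bool}

theorem mem_cutAt {X : Set (Fin a ⊕ Fin b)} {p : Fin a × Fin b} :
    p ∈ (orientedBiclique a b σ).cutAt X ↔ ¬(Sum.inl p.1 ∈ X ↔ Sum.inr p.2 ∈ X) := by
  rw [mem_cutAt_iff]
  change ¬((if σ p.1 then _ else _) ∈ X ↔ (if σ p.1 then _ else _) ∈ X) ↔ _
  cases σ p.1 <;> simp only [Bool.false_eq_true, if_true, if_false]
  tauto

theorem mem_cutAt_inl {i : Fin a} {p : Fin a × Fin b} :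
    p ∈ (orientedBiclique a b σ).cutAt {Sum.inl i} ↔ p.1 = i := by
  rw [mem_cutAt]
  simp

theorem mem_cutAt_inr {k : Fin b} {p : Fin a × Fin b} :
    p ∈ (orientedBiclique a b σ).cutAt {Sum.inr k} ↔ p.2 = k := by
  rw [mem_cutAt]
  simp

theorem cutAt_inl_inter_cutAt_inl {i i' : Fin a} (h : i ≠ i') :
    (orientedBiclique a b σ).cutAt {Sum.inl i} ∩ (orientedBiclique a b σ).cutAt {Sum.inl i'} = ∅ :=
  Set.eq_empty_iff_forall_notMem.mpr fun _ ⟨h₁, h₂⟩ =>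
    h ((mem_cutAt_inl.mp h₁).symm.trans (mem_cutAt_inl.mp h₂))

theorem eqvGen_touchRel {A : Set (Fin a × Fin b)} {p : Fin a × Fin b} (hp : p ∈ A) :
    EqvGen ((orientedBiclique a b σ).touchRel A) (Sum.inl p.1) (Sum.inr p.2) := by
  have h : EqvGen ((orientedBiclique a b σ).touchRel A)
      (if σ p.1 then Sum.inl p.1 else Sum.inr p.2) (if σ p.1 then Sum.inr p.2 else Sum.inl p.1) :=
    EqvGen.rel _ _ ⟨p, hp, rfl, rfl⟩
  cases hσ : σ p.1 <;> simp only [hσ, Bool.false_eq_true, if_true, if_false] at h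
  exacts [EqvGen.symm _ _ h, h]

theorem not_deletable (e : Fin a × Fin b) : ¬ (orientedBiclique a b σ).Deletable e := by
  refine not_deletable_of_grading (D := orientedBiclique a b σ)
    (Sum.elim (fun i => if σ i then 0 else 2) fun _ => 1) (fun p => ?_) (fun p q => ?_) e
  · change Sum.elim _ _ (if σ p.1 then _ else _) = Sum.elim _ _ (if σ p.1 then _ else _) + 1
    cases h : σ p.1 <;> simp [h]
  · change (if σ p.1 then _ else _) = (if σ q.1 then _ else _) →
      (if σ p.1 then _ else _) = (if σ q.1 then _ else _) → p = q
    cases σ p.1 <;> cases σ q.1 <;> simp [Prod.ext_iff] <;> tauto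

theorem not_isolated (ha : 0 < a) (hb : 0 < b) (v : Fin a ⊕ Fin b) :
    ¬ (orientedBiclique a b σ).Isolated v := by
  rcases v with i | k
  · exact not_isolated_of_mem_cutAt (f := (i, ⟨0, hb⟩)) (mem_cutAt_inl.mpr rfl)
  · exact not_isolated_of_mem_cutAt (f := (⟨0, ha⟩, k)) (mem_cutAt_inr.mpr rfl)

theorem isBond_cutAt_inl (ha : 2 ≤ a) (hb : 0 < b) (i : Fin a) :
    (orientedBiclique a b σ).IsBond ((orientedBiclique a b σ).cutAt {Sum.inl i}) := by
  have := Fin.nontrivial_iff_two_le.mpr ha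
  obtain ⟨i', hi'⟩ := exists_ne i
  have hout : ∀ p : Fin a × Fin b, p.1 ≠ i → EqvGen
      ((orientedBiclique a b σ).touchRel ((orientedBiclique a b σ).cutAt {Sum.inl i})ᶜ)
      (Sum.inl p.1) (Sum.inr p.2) :=
    fun p hp => eqvGen_touchRel (mem_cutAt_inl.not.mpr hp)
  refine isBond_cutAt_of_eqvGen ⟨(i, ⟨0, hb⟩), mem_cutAt_inl.mpr rfl⟩
    (c₂ := Sum.inr ⟨0, hb⟩) (by rintro _ rfl; exact EqvGen.refl _) ?_
  rintro (j | k) hv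
  · exact hout (j, _) fun h => hv (h ▸ rfl)
  · exact (EqvGen.symm _ _ (hout (i', k) hi')).trans _ _ _ (hout (i', ⟨0, hb⟩) hi')

theorem isBond_cutAt_inr (ha : 0 < a) (hb : 2 ≤ b) (k : Fin b) :
    (orientedBiclique a b σ).IsBond ((orientedBiclique a b σ).cutAt {Sum.inr k}) := by
  have := Fin.nontrivial_iff_two_le.mpr hb
  obtain ⟨k', hk'⟩ := exists_ne k
  have hout : ∀ p : Fin a × Fin b, p.2 ≠ k → EqvGen
      ((orientedBiclique a b σ).touchRel ((orientedBiclique a b σ).cutAt {Sum.inr k})ᶜ)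
      (Sum.inl p.1) (Sum.inr p.2) :=
    fun p hp => eqvGen_touchRel (mem_cutAt_inr.not.mpr hp)
  refine isBond_cutAt_of_eqvGen ⟨(⟨0, ha⟩, k), mem_cutAt_inr.mpr rfl⟩
    (c₂ := Sum.inl ⟨0, ha⟩) (by rintro _ rfl; exact EqvGen.refl _) ?_
  rintro (j | l) hv
  · exact (hout (j, k') hk').trans _ _ _ (EqvGen.symm _ _ (hout (_, k') hk'))
  · exact EqvGen.symm _ _ (hout (_, l) fun h => hv (h ▸ rfl))

theorem isDirectedBond_cutAt_inl (ha : 2 ≤ a) (hb : 0 < b) (i : Fin a) :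
    (orientedBiclique a b σ).IsDirectedBond ((orientedBiclique a b σ).cutAt {Sum.inl i}) := by
  refine isDirectedBond_cutAt_singleton (isBond_cutAt_inl ha hb i) ?_
  cases hσ : σ i
  · refine Or.inr fun p hp => ?_
    change (if σ p.1 then _ else _) = _ at hp
    split_ifs at hp with h
    simp_all
  · refine Or.inl fun p hp => ?_
    change (if σ p.1 then _ else _) = _ at hp
    split_ifs at hp with h
    simp_all

theorem exists_eq_cutAt_singleton_of_isDirectedBond {S : Set (Fin a × Fin b)}
    (hS : (orientedBiclique a b fun _ => true).IsDirectedBond S) :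
    ∃ v, S = (orientedBiclique a b fun _ => true).cutAt {v} := by
  obtain ⟨⟨-, hmin⟩, ⟨t, ht⟩, X, rfl, hdir⟩ := hS
  have hdir' : ∀ p : Fin a × Fin b, Sum.inr p.2 ∈ X → Sum.inl p.1 ∈ X :=
    fun p h => not_not.mp fun h' => hdir p ⟨h', h⟩
  have ht' : Sum.inl t.1 ∈ X ∧ Sum.inr t.2 ∉ X := by
    have := hdir' t
    rw [mem_cutAt] at ht
    tauto
  by_cases hall : ∀ i, Sum.inl i ∈ X
  · refine ⟨Sum.inr t.2, (hmin _ ⟨⟨t, mem_cutAt_inr.mpr rfl⟩, _, rfl⟩ fun p hp => ?_).symm⟩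
    rw [mem_cutAt_inr] at hp
    rw [mem_cutAt, hp]
    exact fun h => ht'.2 (h.mp (hall _))
  · push Not at hall
    obtain ⟨i, hi⟩ := hall
    refine ⟨Sum.inl t.1, (hmin _ ⟨⟨t, mem_cutAt_inl.mpr rfl⟩, _, rfl⟩ fun p hp => ?_).symm⟩
    rw [mem_cutAt_inl] at hp
    rw [mem_cutAt, hp]
    exact fun h => hi (hdir' (i, p.2) (h.mp ht'.1))

def sourcesWithHub (σ : Fin a → Bool) (j : Fin 2) : Set (Fin a ⊕ Fin 2) :=
  Sum.elim (fun i => σ i = true) (· = j)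

@[simp]
theorem inl_mem_sourcesWithHub {i : Fin a} {j : Fin 2} :
    Sum.inl i ∈ sourcesWithHub σ j ↔ σ i = true :=
  Iff.rfl

@[simp]
theorem inr_mem_sourcesWithHub {k j : Fin 2} : Sum.inr k ∈ sourcesWithHub σ j ↔ k = j :=
  Iff.rfl

theorem mem_cutAt_sourcesWithHub {j : Fin 2} {p : Fin a × Fin 2} :
    p ∈ (orientedBiclique a 2 σ).cutAt (sourcesWithHub σ j) ↔
      j = if σ p.1 then p.2 + 1 else p.2 := by
  rw [mem_cutAt]
  change ¬(σ p.1 = true ↔ p.2 = j) ↔ _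
  generalize p.2 = k
  cases σ p.1 <;> revert j k <;> decide

theorem eq_ite_add_one_comm (s : Bool) (j k : Fin 2) :
    (j = if s then k + 1 else k) ↔ k = if s then j + 1 else j := by
  revert s j k
  decide

theorem isDirectedBond_cutAt_sourcesWithHub (ha : 0 < a) (j : Fin 2) :
    (orientedBiclique a 2 σ).IsDirectedBond
      ((orientedBiclique a 2 σ).cutAt (sourcesWithHub σ j)) := by
  have hout : ∀ p : Fin a × Fin 2, j ≠ (if σ p.1 then p.2 + 1 else p.2) → EqvGen
      ((orientedBiclique a 2 σ).touchRel ((orientedBiclique a 2 σ).cutAt (sourcesWithHub σ j))ᶜ)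
      (Sum.inl p.1) (Sum.inr p.2) :=
    fun p hp => eqvGen_touchRel (mem_cutAt_sourcesWithHub.not.mpr hp)
  have hne : ∀ k : Fin 2, k ≠ k + 1 := by decide
  let i₀ : Fin a := ⟨0, ha⟩
  refine isDirectedBond_cutAt (isBond_cutAt_of_eqvGen ⟨(i₀, if σ i₀ then j + 1 else j),
    mem_cutAt_sourcesWithHub.mpr ((eq_ite_add_one_comm _ _ _).mpr rfl)⟩
    (c₁ := Sum.inr j) (c₂ := Sum.inr (j + 1)) ?_ ?_) ?_
  · rintro (i | k) hv
    · rw [inl_mem_sourcesWithHub] at hv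
      exact hout (i, j) (by simp [hv, hne])
    · obtain rfl : k = j := hv
      exact EqvGen.refl _
  · rintro (i | k) hv
    · rw [inl_mem_sourcesWithHub] at hv
      exact hout (i, j + 1) (by simp [hv, hne])
    · obtain rfl : k = j + 1 := (by decide : ∀ k j : Fin 2, k ≠ j → k = j + 1) k j hv
      exact EqvGen.refl _
  · intro p
    change ¬((if σ p.1 then _ else _) ∉ sourcesWithHub σ j ∧ (if σ p.1 then _ else _) ∈ _)
    cases hσ : σ p.1 <;> simp [hσ]

theorem eq_cutAt_inl_or_eq_cutAt_sourcesWithHub {S : Set (Fin a × Fin 2)}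
    (hS : (orientedBiclique a 2 σ).IsDirectedBond S) :
    (∃ i, S = (orientedBiclique a 2 σ).cutAt {Sum.inl i}) ∨
      ∃ j, S = (orientedBiclique a 2 σ).cutAt (sourcesWithHub σ j) := by
  obtain ⟨⟨-, hmin⟩, ⟨t, ht⟩, X, rfl, hdir⟩ := hS
  by_cases hhubs : Sum.inr 0 ∈ X ↔ Sum.inr 1 ∈ X
  -- hubs on one side: the cut contains the star of `t.1`; otherwise directedness forces `X`
  · have hhub : ∀ k k' : Fin 2, (Sum.inr k ∈ X ↔ Sum.inr k' ∈ X) := by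
      intro k k'
      fin_cases k <;> fin_cases k' <;> simp [hhubs]
    refine Or.inl ⟨t.1, (hmin _ ⟨⟨t, mem_cutAt_inl.mpr rfl⟩, _, rfl⟩ fun p hp => ?_).symm⟩
    rw [mem_cutAt_inl] at hp
    rw [mem_cutAt] at ht ⊢
    rwa [hp, hhub p.2 t.2]
  · have key : ∀ j j' : Fin 2, j ≠ j' → Sum.inr j ∈ X → Sum.inr j' ∉ X →
        X = sourcesWithHub σ j := by
      intro j j' hjj' hj hj'
      ext (i | k)
      · have h : ¬((if σ i then Sum.inl i else Sum.inr j) ∉ X ∧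
            (if σ i then Sum.inr j else Sum.inl i) ∈ X) := hdir (i, j)
        have h' : ¬((if σ i then Sum.inl i else Sum.inr j') ∉ X ∧
            (if σ i then Sum.inr j' else Sum.inl i) ∈ X) := hdir (i, j')
        rw [inl_mem_sourcesWithHub]
        cases hσ : σ i <;> simp only [hσ, Bool.false_eq_true, if_true, if_false] at h h' <;>
          tauto
      · rw [inr_mem_sourcesWithHub]
        fin_cases j <;> fin_cases j' <;> fin_cases k <;> simp_all
    right
    by_cases h0 : Sum.inr 0 ∈ X
    · exact ⟨0, by rw [key 0 1 (by decide) h0 (by tauto)]⟩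
    · exact ⟨1, by rw [key 1 0 (by decide) (by tauto) h0]⟩

theorem ncard_cutAt_inl_inter_cutAt_sourcesWithHub (i : Fin a) (j : Fin 2) :
    ((orientedBiclique a 2 σ).cutAt {Sum.inl i} ∩
      (orientedBiclique a 2 σ).cutAt (sourcesWithHub σ j)).ncard = 1 := by
  refine Set.ncard_eq_one.mpr ⟨(i, if σ i then j + 1 else j), Set.ext fun ⟨i', k⟩ => ?_⟩
  rw [Set.mem_inter_iff, mem_cutAt_inl, mem_cutAt_sourcesWithHub, Set.mem_singleton_iff,
    Prod.mk.injEq]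
  dsimp only
  constructor <;> rintro ⟨rfl, h⟩ <;> exact ⟨rfl, (eq_ite_add_one_comm _ _ _).mp h⟩

theorem cutAt_sourcesWithHub_inter_cutAt_sourcesWithHub {j j' : Fin 2} (h : j ≠ j') :
    (orientedBiclique a 2 σ).cutAt (sourcesWithHub σ j) ∩
      (orientedBiclique a 2 σ).cutAt (sourcesWithHub σ j') = ∅ :=
  Set.eq_empty_iff_forall_notMem.mpr fun _ ⟨h₁, h₂⟩ =>
    h ((mem_cutAt_sourcesWithHub.mp h₁).trans (mem_cutAt_sourcesWithHub.mp h₂).symm)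

end orientedBiclique

section Models

open MultiDigraph orientedBiclique

theorem oneDirK_not_hasOddDijoin {m n : ℕ} (hm : 2 ≤ m) (hn : 2 ≤ n) (hodd : Odd (m + n)) :
    ¬ (oneDirK m n).HasOddDijoin := by
  change ¬ (orientedBiclique m n fun _ => true).HasOddDijoin
  refine not_hasOddDijoin_of_cutAt_singleton (fun _ => Sum.inl_ne_inr) (fun v => ?_)
    (by simpa using hodd)
  rcases v with i | k
  · exact isDirectedBond_cutAt_inl (σ := fun _ => true) hm (by omega) i
  · exact isDirectedBond_cutAt_singleton (isBond_cutAt_inr (σ := fun _ => true) (by omega) hn k)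
      (Or.inr fun _ => Sum.inl_ne_inr)

/-- The edges sharing exactly one end with `e` meet every vertex star avoiding `e` once. -/
theorem oneDirK_hasOddDijoinAwayFrom {m n : ℕ} (e : Fin m × Fin n) :
    (oneDirK m n).HasOddDijoinAwayFrom e := by
  change (orientedBiclique m n fun _ => true).HasOddDijoinAwayFrom e
  refine ⟨(orientedBiclique m n fun _ => true).cutAt {Sum.inl e.1, Sum.inr e.2},
    fun S hS heS => ?_⟩
  obtain ⟨v, rfl⟩ := exists_eq_cutAt_singleton_of_isDirectedBond hS
  obtain ⟨p, hp⟩ : ∃ p, (orientedBiclique m n fun _ => true).cutAt {Sum.inl e.1, Sum.inr e.2} ∩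
      (orientedBiclique m n fun _ => true).cutAt {v} = {p} := by
    rcases v with i | k
    · have hi : i ≠ e.1 := fun h => heS (mem_cutAt_inl.mpr h.symm)
      refine ⟨(i, e.2), Set.ext fun p => ?_⟩
      rw [Set.mem_inter_iff, mem_cutAt, mem_cutAt_inl]
      simp [Prod.ext_iff]
      grind
    · have hk : k ≠ e.2 := fun h => heS (mem_cutAt_inr.mpr h.symm)
      refine ⟨(e.1, k), Set.ext fun p => ?_⟩
      rw [Set.mem_inter_iff, mem_cutAt, mem_cutAt_inr]
      simp [Prod.ext_iff]
      grind
  rw [hp, Set.ncard_singleton]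
  exact odd_one

theorem diamondD_not_hasOddDijoin {n : ℕ} {σ : Fin n → Bool} (hn : 2 ≤ n) (hodd : Odd (n + 2)) :
    ¬ (diamondD n σ).HasOddDijoin := by
  change ¬ (orientedBiclique n 2 σ).HasOddDijoin
  refine not_hasOddDijoin_of_cover (Sum.elim (fun i => (orientedBiclique n 2 σ).cutAt {Sum.inl i})
    fun j => (orientedBiclique n 2 σ).cutAt (sourcesWithHub σ j)) ?_ (fun p => ?_)
    (by simpa using hodd)
  · rintro (i | j)
    exacts [isDirectedBond_cutAt_inl hn two_pos i, isDirectedBond_cutAt_sourcesWithHub (by omega) j]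
  · have : {x | p ∈ Sum.elim (fun i => (orientedBiclique n 2 σ).cutAt {Sum.inl i})
        (fun j => (orientedBiclique n 2 σ).cutAt (sourcesWithHub σ j)) x} =
        {Sum.inl p.1, Sum.inr (if σ p.1 then p.2 + 1 else p.2)} := by
      ext (i | j)
      · simp only [Set.mem_ofPred_eq, Sum.elim_inl, Set.mem_insert_iff, Set.mem_singleton_iff,
          Sum.inl.injEq, reduceCtorEq, or_false]
        rw [mem_cutAt_inl]
        exact eq_comm
      · simp only [Set.mem_ofPred_eq, Sum.elim_inr, Set.mem_insert_iff, Set.mem_singleton_iff,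
          reduceCtorEq, false_or, Sum.inr.injEq]
        rw [mem_cutAt_sourcesWithHub]
    rw [this, Set.ncard_pair Sum.inl_ne_inr]
    exact even_two

/-- Witness: the star of the non-hub end of `e` plus the hub-separating cut containing `e`; every
directed bond avoiding `e` meets exactly one of the two, in a single edge. -/
theorem diamondD_hasOddDijoinAwayFrom {n : ℕ} {σ : Fin n → Bool} (e : Fin n × Fin 2) :
    (diamondD n σ).HasOddDijoinAwayFrom e := by
  change (orientedBiclique n 2 σ).HasOddDijoinAwayFrom e
  refine ⟨symmDiff ((orientedBiclique n 2 σ).cutAt {Sum.inl e.1})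
    ((orientedBiclique n 2 σ).cutAt (sourcesWithHub σ (if σ e.1 then e.2 + 1 else e.2))),
    fun S hS heS => ?_⟩
  rw [← ZMod.natCast_eq_one_iff_odd, natCast_ncard_symmDiff_inter]
  rcases eq_cutAt_inl_or_eq_cutAt_sourcesWithHub hS with ⟨i, rfl⟩ | ⟨j, rfl⟩
  · have hi : e.1 ≠ i := fun h => heS (mem_cutAt_inl.mpr h)
    rw [cutAt_inl_inter_cutAt_inl hi, Set.inter_comm, ncard_cutAt_inl_inter_cutAt_sourcesWithHub]
    simp
  · have hj : (if σ e.1 then e.2 + 1 else e.2) ≠ j := fun h =>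
      heS (mem_cutAt_sourcesWithHub.mpr h.symm)
    rw [ncard_cutAt_inl_inter_cutAt_sourcesWithHub,
      cutAt_sourcesWithHub_inter_cutAt_sourcesWithHub hj]
    simp

end Models

theorem stmt18 (D : MultiDigraph) (h : IsOddDiamond D ∨ IsOddOneDirection D) :
    MinimalObstruction D := by
  rcases h with ⟨n, σ, hn, hodd, ⟨φ⟩⟩ | ⟨m, n, hm, hn, hodd, ⟨φ⟩⟩
  · exact φ.minimalObstruction (diamondD_not_hasOddDijoin (by omega) hodd)
      (orientedBiclique.not_deletable (σ := σ))
      (orientedBiclique.not_isolated (σ := σ) (by omega) two_pos) diamondD_hasOddDijoinAwayFrom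
  · exact φ.minimalObstruction (oneDirK_not_hasOddDijoin hm hn hodd)
      (orientedBiclique.not_deletable (σ := fun _ => true))
      (orientedBiclique.not_isolated (σ := fun _ => true) (by omega) (by omega))
      oneDirK_hasOddDijoinAwayFrom
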